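/- Let N be a prime, let P, Q ∈ ℤ[x] be polynomials with P(0) = Q(0) = 0, let f₁, g₁ : ℤ/Nℤ → ℂ be one-bounded, let K : ℤ/Nℤ → ℂ be one-bounded, and let α ∈ (1/N)ℤ/ℤ. Then |𝔼_{x,y} f₁(x) g₁(x+P(y)) e(αQ(y)) K(y)| ≤ max_{β∈(1/N)ℤ/ℤ} |𝔼_y e(αQ(y) + βP(y)) K(y)|. -/

import Mathlib

/-!
Over a finite abelian group `A`, orthogonality of characters gives
`|A| ∑_{x,y} f(x) g(x + p(y)) w(y) = ∑_ψ f̂(ψ) ĝ(ψ⁻¹) T(ψ)`, where `f̂(ψ) = ∑_x f(x) ψ(x)` and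
`T(ψ) = ∑_y w(y) ψ(p(y))`. Bounding each `|T(ψ)|` by its maximum leaves `∑_ψ |f̂(ψ)| |ĝ(ψ⁻¹)|`,
which Cauchy–Schwarz and Parseval bound by `|A|²` when `f` and `g` are one-bounded. For `A = ℤ/Nℤ`
the characters are `y ↦ e(βy)`, so with `p = P` and `w = e(αQ) K` the sums `T(ψ)` are exactly the
exponential sums on the right-hand side.
-/
open Finset

noncomputable section

/-- Evaluation of an integer polynomial at an element of `ZMod N`. -/
def pEvalZ {N : ℕ} (P : Polynomial ℤ) (y : ZMod N) : ZMod N :=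
  Polynomial.eval₂ (Int.castRingHom (ZMod N)) y P

/-- `e(x/N)` for `x : ZMod N`: the additive character `x ↦ e^{2πi x/N}`.
For `α = a/N ∈ (1/N)ℤ/ℤ` and `x : ZMod N`, `e(αx) = eN (a*x)`. -/
def eN {N : ℕ} [NeZero N] (x : ZMod N) : ℂ :=
  Complex.exp (2 * Real.pi * Complex.I * (x.val : ℂ) / (N : ℂ))

namespace AddChar

open Fintype (card)

variable {α : Type*} [AddCommGroup α] [Fintype α]

lemma sum_sum_mul_apply_sub (c : α → ℂ) (u : α) :
    ∑ ψ : AddChar α ℂ, ∑ z, c z * ψ (u - z) = card α * c u := by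
  classical
  rw [sum_comm]
  simp_rw [← mul_sum, sum_apply_eq_ite, sub_eq_zero, mul_ite, mul_zero, sum_ite_eq,
    if_pos (mem_univ u)]
  ring

lemma sum_norm_sum_mul_sq (f : α → ℂ) :
    ∑ ψ : AddChar α ℂ, ‖∑ x, f x * ψ x‖ ^ 2 = card α * ∑ x, ‖f x‖ ^ 2 := by
  apply Complex.ofReal_injective
  push_cast
  simp_rw [← Complex.mul_conj', map_sum, map_mul, ← map_neg_eq_conj, sum_mul_sum, mul_sum]
  calc ∑ ψ : AddChar α ℂ, ∑ x, ∑ z, f x * ψ x * ((starRingEnd ℂ) (f z) * ψ (-z))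
      = ∑ x, ∑ ψ : AddChar α ℂ, ∑ z, f x * (starRingEnd ℂ) (f z) * ψ (x - z) := by
        rw [sum_comm]
        refine sum_congr rfl fun x _ => sum_congr rfl fun ψ _ => sum_congr rfl fun z _ => ?_
        rw [sub_eq_add_neg, map_add_eq_mul]
        ring
    _ = ∑ x, card α * (f x * (starRingEnd ℂ) (f x)) := by
        simp_rw [sum_sum_mul_apply_sub]

lemma sum_norm_sum_mul_sq_le (f : α → ℂ) (hf : ∀ x, ‖f x‖ ≤ 1) :
    ∑ ψ : AddChar α ℂ, ‖∑ x, f x * ψ x‖ ^ 2 ≤ (card α : ℝ) ^ 2 := by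
  rw [sum_norm_sum_mul_sq, sq]
  gcongr
  calc ∑ x, ‖f x‖ ^ 2 ≤ ∑ _x : α, (1 : ℝ) := by
        gcongr with x; exact pow_le_one₀ (norm_nonneg _) (hf x)
    _ = card α := by simp

lemma sum_norm_mul_norm_le (f g : α → ℂ) (hf : ∀ x, ‖f x‖ ≤ 1) (hg : ∀ x, ‖g x‖ ≤ 1) :
    ∑ ψ : AddChar α ℂ, ‖∑ x, f x * ψ x‖ * ‖∑ x, g x * ψ⁻¹ x‖ ≤ (card α : ℝ) ^ 2 := by
  have hg' : ∑ ψ : AddChar α ℂ, ‖∑ x, g x * ψ⁻¹ x‖ ^ 2 ≤ (card α : ℝ) ^ 2 := by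
    rw [← Equiv.sum_comp (Equiv.inv (AddChar α ℂ))]
    simpa using sum_norm_sum_mul_sq_le g hg
  refine (Real.sum_mul_le_sqrt_mul_sqrt _ _ _).trans ?_
  calc _ ≤ √((card α : ℝ) ^ 2) * √((card α : ℝ) ^ 2) := by
        gcongr
        exact sum_norm_sum_mul_sq_le f hf
    _ = (card α : ℝ) ^ 2 := by simp [sq]

lemma sum_mul_sum_mul_sum_eq {ι : Type*} [Fintype ι] (f g : α → ℂ) (p : ι → α) (w : ι → ℂ) :
    ∑ ψ : AddChar α ℂ, (∑ x, f x * ψ x) * (∑ z, g z * ψ⁻¹ z) * (∑ y, w y * ψ (p y)) =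
      card α * ∑ x, ∑ y, f x * g (x + p y) * w y := by
  calc _ = ∑ x, ∑ y, ∑ ψ : AddChar α ℂ, ∑ z, f x * g z * w y * ψ (x + p y - z) := by
        simp_rw [sum_mul_sum, sum_mul]
        rw [sum_comm]
        refine sum_congr rfl fun x _ => ?_
        rw [sum_comm]
        refine sum_congr rfl fun y _ => sum_congr rfl fun ψ _ => sum_congr rfl fun z _ => ?_
        rw [sub_eq_add_neg, map_add_eq_mul, map_add_eq_mul, ← inv_apply]
        ring
    _ = _ := by simp_rw [sum_sum_mul_apply_sub, mul_sum]

lemma norm_sum_sum_mul_le {ι : Type*} [Fintype ι] (f g : α → ℂ) (p : ι → α) (w : ι → ℂ)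
    (hf : ∀ x, ‖f x‖ ≤ 1) (hg : ∀ x, ‖g x‖ ≤ 1) {M : ℝ}
    (hM : ∀ ψ : AddChar α ℂ, ‖∑ y, w y * ψ (p y)‖ ≤ M) :
    ‖∑ x, ∑ y, f x * g (x + p y) * w y‖ ≤ card α * M := by
  have hM₀ : 0 ≤ M := (norm_nonneg _).trans (hM 0)
  have hcard : (0 : ℝ) < card α := by exact_mod_cast Fintype.card_pos
  refine le_of_mul_le_mul_left ?_ hcard
  calc card α * ‖∑ x, ∑ y, f x * g (x + p y) * w y‖
      = ‖∑ ψ : AddChar α ℂ, (∑ x, f x * ψ x) * (∑ z, g z * ψ⁻¹ z) * (∑ y, w y * ψ (p y))‖ := by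
        rw [sum_mul_sum_mul_sum_eq, norm_mul, Complex.norm_natCast]
    _ ≤ ∑ ψ : AddChar α ℂ, ‖∑ x, f x * ψ x‖ * ‖∑ z, g z * ψ⁻¹ z‖ * M := by
        refine (norm_sum_le _ _).trans (sum_le_sum fun ψ _ => ?_)
        rw [norm_mul, norm_mul]
        gcongr
        exact hM ψ
    _ ≤ card α ^ 2 * M := by
        rw [← sum_mul]
        gcongr
        exact sum_norm_mul_norm_le f g hf hg
    _ = card α * (card α * M) := by ring

end AddChar

lemma eN_eq_stdAddChar {N : ℕ} [NeZero N] (x : ZMod N) : eN x = ZMod.stdAddChar x := by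
  rw [ZMod.stdAddChar_apply, ZMod.toCircle_apply, eN]

lemma eN_add {N : ℕ} [NeZero N] (x y : ZMod N) : eN (x + y) = eN x * eN y := by
  simp only [eN_eq_stdAddChar, AddChar.map_add_eq_mul]

lemma AddChar.zmodAddEquiv_apply_eq_eN {N : ℕ} [NeZero N] (b y : ZMod N) :
    zmodAddEquiv b y = eN (b * y) := by
  rw [eN_eq_stdAddChar]
  rfl

theorem stmt18_general (N : ℕ) [NeZero N]
    (P Q : Polynomial ℤ)
    (f₁ g₁ K : ZMod N → ℂ)
    (hf₁ : ∀ x, ‖f₁ x‖ ≤ 1) (hg₁ : ∀ x, ‖g₁ x‖ ≤ 1)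
    (a : ZMod N) :
    ‖(∑ x : ZMod N, ∑ y : ZMod N,
        f₁ x * g₁ (x + pEvalZ P y) * eN (a * pEvalZ Q y) * K y) / (N : ℂ) ^ 2‖ ≤
      ⨆ b : ZMod N,
        ‖(∑ y : ZMod N,
          eN (a * pEvalZ Q y + b * pEvalZ P y) * K y) / (N : ℂ)‖ := by
  set M := ⨆ b : ZMod N,
    ‖(∑ y : ZMod N, eN (a * pEvalZ Q y + b * pEvalZ P y) * K y) / (N : ℂ)‖
  have hN_pos : (0 : ℝ) < N := by exact_mod_cast Nat.pos_of_ne_zero (NeZero.ne N)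
  have hM : ∀ ψ : AddChar (ZMod N) ℂ,
      ‖∑ y, eN (a * pEvalZ Q y) * K y * ψ (pEvalZ P y)‖ ≤ N * M := by
    intro ψ
    obtain ⟨b, rfl⟩ := AddChar.zmodAddEquiv.surjective ψ
    have hb : _ ≤ M := le_ciSup (Set.finite_range _).bddAbove b
    rw [norm_div, Complex.norm_natCast, div_le_iff₀ hN_pos, mul_comm] at hb
    simpa only [AddChar.zmodAddEquiv_apply_eq_eN, eN_add, mul_right_comm _ (K _)] using hb
  have hbound := AddChar.norm_sum_sum_mul_le f₁ g₁ (pEvalZ P) _ hf₁ hg₁ hM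
  rw [norm_div, norm_pow, Complex.norm_natCast, div_le_iff₀ (by positivity)]
  simp only [ZMod.card, ← mul_assoc] at hbound
  exact hbound.trans_eq (by ring)

theorem stmt18 (N : ℕ) [NeZero N] (hN : Nat.Prime N)
    (P Q : Polynomial ℤ) (hP0 : P.eval 0 = 0) (hQ0 : Q.eval 0 = 0)
    (f₁ g₁ K : ZMod N → ℂ)
    (hf₁ : ∀ x, ‖f₁ x‖ ≤ 1) (hg₁ : ∀ x, ‖g₁ x‖ ≤ 1)
    (hK : ∀ y, ‖K y‖ ≤ 1) (a : ZMod N) :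
    ‖(∑ x : ZMod N, ∑ y : ZMod N,
        f₁ x * g₁ (x + pEvalZ P y) * eN (a * pEvalZ Q y) * K y) / (N : ℂ) ^ 2‖ ≤
      ⨆ b : ZMod N,
        ‖(∑ y : ZMod N,
          eN (a * pEvalZ Q y + b * pEvalZ P y) * K y) / (N : ℂ)‖ :=
  stmt18_general N P Q f₁ g₁ K hf₁ hg₁ a

end
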